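/- Let (X,E) be transitive. Then F admits a Hall collection if and only if F admits a disparate selection. Equivalently, there exists a selection s of F whose graph is a disparate set if and only if for every nonempty subset W ⊆ X there is a disparate subset A ⊆ G(F|_W) with #A ≥ #W. -/

import Mathlib

open Set

/-- Two points of `X × Y` are disparate: they are distinct, and if their second
coordinates agree then their first coordinates are not adjacent in `G`. -/
def Disparate {X Y : Type*} (G : SimpleGraph X) (a b : X × Y) : Prop :=
  a ≠ b ∧ (a.2 = b.2 → ¬ G.Adj a.1 b.1)

/-- A set `A ⊆ X × Y` is disparate if any two distinct points of `A` are disparate. -/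
def DisparateSet {X Y : Type*} (G : SimpleGraph X) (A : Set (X × Y)) : Prop :=
  ∀ a ∈ A, ∀ b ∈ A, a ≠ b → Disparate G a b

/-- The hull of `A`: all points that fail to be disparate from some point of `A`. -/
def dispHull {X Y : Type*} (G : SimpleGraph X) (A : Set (X × Y)) : Set (X × Y) :=
  {a | ∃ a' ∈ A, ¬ Disparate G a a'}

/-- The complement of `A`: all points disparate from every point of `A`. -/
def dispCompl {X Y : Type*} (G : SimpleGraph X) (A : Set (X × Y)) : Set (X × Y) :=
  {a | ∀ a' ∈ A, Disparate G a a'}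

/-- The graph of the restriction of a set-valued mapping `F` to `V`. -/
def svGraphOn {X Y : Type*} (F : X → Set Y) (V : Set X) : Set (X × Y) :=
  {p | p.1 ∈ V ∧ p.2 ∈ F p.1}

/-- The graph of the complement mapping `F_{W,Z}`, namely
`G(F|_{X∖W}) ∩ compl(Z)`. -/
def complMapGraph {X Y : Type*} (G : SimpleGraph X) (F : X → Set Y) (W : Set X)
    (Z : Set (X × Y)) : Set (X × Y) :=
  svGraphOn F Wᶜ ∩ dispCompl G Z

/-- The graph `{(x, s x) : x ∈ V}` of the restriction of a point-valued map `s` to `V`. -/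
def selGraphOn {X Y : Type*} (s : X → Y) (V : Set X) : Set (X × Y) :=
  {p | p.1 ∈ V ∧ p.2 = s p.1}

/-- `size(S)`: the maximum cardinality of a disparate subset of `S`. -/
noncomputable def dispSize {X Y : Type*} (G : SimpleGraph X) (S : Set (X × Y)) : ℕ :=
  sSup {n | ∃ A ⊆ S, DisparateSet G A ∧ A.ncard = n}

/-- The graph `(X, E)` is transitive. -/
def GraphTransitive {X : Type*} (G : SimpleGraph X) : Prop :=
  ∀ ⦃x x' x'' : X⦄, G.Adj x x' → G.Adj x' x'' → x ≠ x'' → G.Adj x x''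

/-!
On a transitive graph, "equal or adjacent" is an equivalence relation, and a set `A ⊆ X × Y`
is disparate exactly when `(x, y) ↦ ([x], y)` is injective on `A`. A disparate selection is
therefore a system of distinct representatives of the finite sets `{[x]} × F x`, and a Hall
collection is precisely Hall's marriage condition for that family.
-/

section

variable {X Y : Type*} {G : SimpleGraph X}

def GraphTransitive.setoid (hG : GraphTransitive G) : Setoid X where
  r x x' := x = x' ∨ G.Adj x x'
  iseqv := by
    refine ⟨fun _ => Or.inl rfl, ?_, ?_⟩
    · rintro x x' (rfl | h)
      exacts [Or.inl rfl, Or.inr h.symm]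
    · rintro x x' x'' (rfl | h) (rfl | h')
      · exact Or.inl rfl
      · exact Or.inr h'
      · exact Or.inr h
      · by_cases hx : x = x''
        exacts [Or.inl hx, Or.inr (hG h h' hx)]

theorem DisparateSet.mono {A B : Set (X × Y)} (hAB : A ⊆ B) (hB : DisparateSet G B) :
    DisparateSet G A :=
  fun a ha b hb hne => hB a (hAB ha) b (hAB hb) hne

theorem disparateSet_iff_injOn (hG : GraphTransitive G) {A : Set (X × Y)} :
    DisparateSet G A ↔ InjOn (Prod.map (Quotient.mk hG.setoid) id) A := by
  constructor
  · intro hA a ha b hb hab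
    obtain ⟨h1, h2⟩ := Prod.ext_iff.1 hab
    by_contra hne
    rcases Quotient.exact h1 with h | h
    · exact hne (Prod.ext h h2)
    · exact (hA a ha b hb hne).2 h2 h
  · intro hA a ha b hb hne
    refine ⟨hne, fun h2 hadj => hne (hA ha hb ?_)⟩
    exact Prod.ext (Quotient.sound (Or.inr hadj)) h2

theorem selGraphOn_eq_image (s : X → Y) (V : Set X) :
    selGraphOn s V = (fun x => (x, s x)) '' V := by
  ext ⟨x, y⟩
  simp [selGraphOn, eq_comm]

theorem selGraphOn_mono (s : X → Y) : Monotone (selGraphOn s) :=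
  fun _ _ hV _ hp => ⟨hV hp.1, hp.2⟩

theorem ncard_selGraphOn (s : X → Y) (V : Set X) : (selGraphOn s V).ncard = V.ncard := by
  rw [selGraphOn_eq_image]
  exact ncard_image_of_injective V fun _ _ h => congrArg Prod.fst h

theorem selGraphOn_subset_svGraphOn {F : X → Set Y} {s : X → Y} (hs : ∀ x, s x ∈ F x)
    (V : Set X) : selGraphOn s V ⊆ svGraphOn F V := by
  rintro p ⟨hx, hp⟩
  exact ⟨hx, hp ▸ hs p.1⟩

open Classical in
noncomputable def GraphTransitive.hallFamily [Fintype Y] (hG : GraphTransitive G)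
    (F : X → Set Y) (x : X) : Finset (Quotient hG.setoid × Y) :=
  {Quotient.mk hG.setoid x} ×ˢ (F x).toFinset

theorem GraphTransitive.mem_hallFamily [Fintype Y] (hG : GraphTransitive G) {F : X → Set Y}
    {x : X} {p : Quotient hG.setoid × Y} :
    p ∈ hG.hallFamily F x ↔ p.1 = Quotient.mk hG.setoid x ∧ p.2 ∈ F x := by
  simp only [GraphTransitive.hallFamily, Finset.mem_product, Finset.mem_singleton,
    Set.mem_toFinset]

theorem GraphTransitive.ncard_le_card_biUnion_hallFamily [Fintype Y] (hG : GraphTransitive G)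
    [DecidableEq (Quotient hG.setoid × Y)] {F : X → Set Y} {S : Finset X} {A : Set (X × Y)}
    (hAS : A ⊆ svGraphOn F S) (hA : DisparateSet G A) :
    A.ncard ≤ (S.biUnion (hG.hallFamily F)).card := by
  rw [← ncard_coe_finset, ← ((disparateSet_iff_injOn hG).1 hA).ncard_image]
  refine ncard_le_ncard ?_ (Finset.finite_toSet _)
  rintro _ ⟨p, hp, rfl⟩
  obtain ⟨hx, hy⟩ := hAS hp
  exact Finset.mem_biUnion.2 ⟨p.1, hx, hG.mem_hallFamily.2 ⟨rfl, hy⟩⟩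

end

theorem disparate_selection_iff_Hall_collection_general {X Y : Type*} [Fintype Y]
    (G : SimpleGraph X) (hG : GraphTransitive G) (F : X → Set Y) :
    (∃ s : X → Y, (∀ x, s x ∈ F x) ∧ DisparateSet G (selGraphOn s Set.univ)) ↔
      (∀ W : Set X, W.Nonempty →
        ∃ A ⊆ svGraphOn F W, DisparateSet G A ∧ W.ncard ≤ A.ncard) := by
  classical
  constructor
  · rintro ⟨s, hs, hd⟩ W -
    refine ⟨selGraphOn s W, selGraphOn_subset_svGraphOn hs W,
      hd.mono (selGraphOn_mono s (subset_univ W)), (ncard_selGraphOn s W).ge⟩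
  · intro hHall
    have hMarriage : ∀ S : Finset X, S.card ≤ (S.biUnion (hG.hallFamily F)).card := by
      intro S
      rcases S.eq_empty_or_nonempty with rfl | hS
      · simp
      obtain ⟨A, hAS, hA, hcard⟩ := hHall S (by exact_mod_cast hS)
      exact (ncard_coe_finset S ▸ hcard).trans (hG.ncard_le_card_biUnion_hallFamily hAS hA)
    obtain ⟨f, hf, hfF⟩ :=
      (Finset.all_card_le_biUnion_card_iff_exists_injective _).1 hMarriage
    have hf_eq : Prod.map (Quotient.mk hG.setoid) id ∘ (fun x => (x, (f x).2)) = f :=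
      funext fun x => Prod.ext (hG.mem_hallFamily.1 (hfF x)).1.symm rfl
    refine ⟨fun x => (f x).2, fun x => (hG.mem_hallFamily.1 (hfF x)).2, ?_⟩
    rw [disparateSet_iff_injOn hG, selGraphOn_eq_image, image_univ]
    exact (hf_eq ▸ hf).injOn_range

/-- On a transitive graph, `F` admits a disparate selection iff `F` admits a Hall
collection, i.e. iff every nonempty `W ⊆ X` carries a disparate subset of
`G(F|_W)` of cardinality at least `#W`. -/
theorem disparate_selection_iff_Hall_collection {X Y : Type*} [Fintype X] [Fintype Y]
    (G : SimpleGraph X) (hG : GraphTransitive G) (F : X → Set Y) :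
    (∃ s : X → Y, (∀ x, s x ∈ F x) ∧ DisparateSet G (selGraphOn s Set.univ)) ↔
      (∀ W : Set X, W.Nonempty →
        ∃ A ⊆ svGraphOn F W, DisparateSet G A ∧ W.ncard ≤ A.ncard) :=
  disparate_selection_iff_Hall_collection_general G hG F
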